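/- Let G be a connected graph and A, B disjoint nonadjacent nonempty vertex sets. A set S ⊆ V(G)∖(A∪B) is a safe minimal A,B-separator if and only if for every pair of vertices s ∈ A and t ∈ B, S is a minimal s,t-separator of G with A ⊆ C_s(G−S) and B ⊆ C_t(G−S). -/

import Mathlib

variable {V : Type*}

/-- Reachability in `G` by a walk avoiding the vertex set `S`. -/
def ReachAvoid (G : SimpleGraph V) (S : Set V) (u v : V) : Prop :=
  ∃ w : G.Walk u v, ∀ x ∈ w.support, x ∉ S

/-- The connected component of `G − S` containing `s`, as a subset of `V`. -/
def compOf (G : SimpleGraph V) (S : Set V) (s : V) : Set V :=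
  {v | ReachAvoid G S s v}

/-- `S` is an `s,t`-separator of `G`. -/
def IsSep (G : SimpleGraph V) (s t : V) (S : Set V) : Prop :=
  s ∉ S ∧ t ∉ S ∧ ¬ ReachAvoid G S s t

/-- `S` is a minimal `s,t`-separator of `G`. -/
def IsMinSep (G : SimpleGraph V) (s t : V) (S : Set V) : Prop :=
  IsSep G s t S ∧ ∀ S' ⊂ S, ¬ IsSep G s t S'

/-- The open neighborhood of a vertex set `X`. -/
def nbhd (G : SimpleGraph V) (X : Set V) : Set V :=
  {v | v ∉ X ∧ ∃ x ∈ X, G.Adj x v}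

/-- The closed neighborhood of a vertex `v`. -/
def clNbhd (G : SimpleGraph V) (v : V) : Set V :=
  insert v (G.neighborSet v)

/-- `S` is a minimal `s,t`-separator close to `sA`. -/
def CloseTo (G : SimpleGraph V) (s t : V) (A : Set V) (S : Set V) : Prop :=
  IsMinSep G s t S ∧ A ⊆ compOf G S s ∧
    ∀ T, IsMinSep G s t T → T ≠ S → A ⊆ compOf G T s →
      ¬ compOf G T s ⊆ compOf G S s

/-- `G` contains no asteroidal triple. -/
def IsATFree (G : SimpleGraph V) : Prop :=
  ¬ ∃ a b c : V, a ≠ b ∧ a ≠ c ∧ b ≠ c ∧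
    ¬ G.Adj a b ∧ ¬ G.Adj a c ∧ ¬ G.Adj b c ∧
    (∃ w : G.Walk a b, ∀ x ∈ w.support, x ∉ clNbhd G c) ∧
    (∃ w : G.Walk a c, ∀ x ∈ w.support, x ∉ clNbhd G b) ∧
    (∃ w : G.Walk b c, ∀ x ∈ w.support, x ∉ clNbhd G a)

/-- `S` is an `A,B`-separator. -/
def IsABSep (G : SimpleGraph V) (A B : Set V) (S : Set V) : Prop :=
  S ⊆ (A ∪ B)ᶜ ∧ ∀ a ∈ A, ∀ b ∈ B, ¬ ReachAvoid G S a b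

/-- `S` is a minimal `A,B`-separator. -/
def IsMinABSep (G : SimpleGraph V) (A B S : Set V) : Prop :=
  IsABSep G A B S ∧ ∀ S' ⊂ S, ¬ IsABSep G A B S'

/-- `S` is a safe (connectivity-preserving) `A,B`-separator: removing `S`
leaves two distinct components, one containing `A` and one containing `B`. -/
def IsSafeSep (G : SimpleGraph V) (A B S : Set V) : Prop :=
  S ⊆ (A ∪ B)ᶜ ∧ ∃ a b : V, a ∉ S ∧ b ∉ S ∧
    A ⊆ compOf G S a ∧ B ⊆ compOf G S b ∧
    Disjoint (compOf G S a) (compOf G S b)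

/-- The induced subgraph on `X` is connected (any two vertices of `X` are joined
by a walk staying in `X`). -/
def ConnIn (G : SimpleGraph V) (X : Set V) : Prop :=
  ∀ x ∈ X, ∀ y ∈ X, ∃ w : G.Walk x y, ∀ z ∈ w.support, z ∈ X

/-- The graph obtained from `G` by contracting `{s} ∪ A` to the vertex `s`
(the vertices of `A` become isolated). -/
def contractGraph (G : SimpleGraph V) (s : V) (A : Set V) : SimpleGraph V where
  Adj u v := u ∉ A ∧ v ∉ A ∧ u ≠ v ∧
    (G.Adj u v ∨ (u = s ∧ ∃ a ∈ A, G.Adj a v) ∨ (v = s ∧ ∃ a ∈ A, G.Adj a u))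
  symm := by
    constructor
    rintro u v ⟨hu, hv, hne, h⟩
    refine ⟨hv, hu, hne.symm, ?_⟩
    rcases h with h | h | h
    · exact Or.inl h.symm
    · exact Or.inr (Or.inr h)
    · exact Or.inr (Or.inl h)
  loopless := by
    constructor
    rintro u ⟨_, _, hne, _⟩
    exact hne rfl

/-- The graph obtained from `G` by adding all edges from `s` to `N_G[A]`. -/
def addApex (G : SimpleGraph V) (s : V) (A : Set V) : SimpleGraph V where
  Adj u v := G.Adj u v ∨
    (u = s ∧ v ≠ s ∧ v ∈ A ∪ nbhd G A) ∨
    (v = s ∧ u ≠ s ∧ u ∈ A ∪ nbhd G A)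
  symm := by
    constructor
    rintro u v (h | h | h)
    · exact Or.inl h.symm
    · exact Or.inr (Or.inr h)
    · exact Or.inr (Or.inl h)
  loopless := by
    constructor
    rintro u (h | ⟨h1, h2, _⟩ | ⟨h1, h2, _⟩)
    · exact G.loopless.irrefl u h
    · exact h2 h1
    · exact h2 h1

/-- The graph obtained from `G` by subdividing every edge. -/
def subdiv (G : SimpleGraph V) : SimpleGraph (V ⊕ G.edgeSet) where
  Adj x y :=
    match x, y with
    | Sum.inl u, Sum.inr e => u ∈ (e : Sym2 V)
    | Sum.inr e, Sum.inl u => u ∈ (e : Sym2 V)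
    | _, _ => False
  symm := by
    constructor
    rintro (u | e) (v | f) h <;> exact h
  loopless := by
    constructor
    rintro (u | e) h <;> exact h

/-- The instance `2Dis(G,A,B)` of 2-Disjoint-Connected-Subgraphs has a solution. -/
def TwoDisSolvable (G : SimpleGraph V) (A B : Set V) : Prop :=
  ∃ A₁ B₁ : Set V, Disjoint A₁ B₁ ∧ A ⊆ A₁ ∧ B ⊆ B₁ ∧
    ConnIn G A₁ ∧ ConnIn G B₁

/-!
Once `A` lies in the component of `s` and `B` in that of `t` in `G - S`, a subset `S' ⊆ S`
separates `A` from `B` exactly when it separates `s` from `t`, because in `G - S'` every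
`a ∈ A` is still joined to `s` and every `b ∈ B` to `t`. Hence minimality as an `A,B`-separator
and as an `s,t`-separator coincide. A safe separator puts `A` and `B` into components of `G - S`,
and these are the components of any `s ∈ A` and `t ∈ B`.
-/

namespace ReachAvoid

variable {G : SimpleGraph V} {S : Set V} {u v w : V}

theorem symm (h : ReachAvoid G S u v) : ReachAvoid G S v u := by
  obtain ⟨p, hp⟩ := h
  exact ⟨p.reverse, fun x hx => hp x (by simpa using hx)⟩

theorem trans (h₁ : ReachAvoid G S u v) (h₂ : ReachAvoid G S v w) : ReachAvoid G S u w := by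
  obtain ⟨p, hp⟩ := h₁
  obtain ⟨q, hq⟩ := h₂
  refine ⟨p.append q, fun x hx => ?_⟩
  rcases (SimpleGraph.Walk.mem_support_append_iff _ _).mp hx with hx | hx
  exacts [hp x hx, hq x hx]

theorem mono {S' : Set V} (hS : S' ⊆ S) (h : ReachAvoid G S u v) : ReachAvoid G S' u v := by
  obtain ⟨p, hp⟩ := h
  exact ⟨p, fun x hx hxS => hp x hx (hS hxS)⟩

theorem notMem_right (h : ReachAvoid G S u v) : v ∉ S := by
  obtain ⟨p, hp⟩ := h
  exact hp v p.end_mem_support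

end ReachAvoid

section Components

variable {G : SimpleGraph V} {S : Set V} {u v : V}

theorem compOf_eq_of_mem (h : v ∈ compOf G S u) : compOf G S v = compOf G S u :=
  Set.ext fun _ => ⟨h.trans, h.symm.trans⟩

theorem subset_compOf_of_mem {A : Set V} (hA : A ⊆ compOf G S u) (hv : v ∈ A) :
    A ⊆ compOf G S v := by
  rwa [compOf_eq_of_mem (hA hv)]

theorem disjoint_compOf (h : ¬ ReachAvoid G S u v) :
    Disjoint (compOf G S u) (compOf G S v) :=
  Set.disjoint_left.mpr fun _ hu hv => h (hu.trans hv.symm)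

theorem subset_compl_union_of_subset_compOf {A B : Set V} {s t : V}
    (hA : A ⊆ compOf G S s) (hB : B ⊆ compOf G S t) : S ⊆ (A ∪ B)ᶜ := by
  rintro x hxS (hxA | hxB)
  exacts [(hA hxA).notMem_right hxS, (hB hxB).notMem_right hxS]

end Components

section Separators

variable {G : SimpleGraph V} {A B S : Set V} {s t : V}

theorem isABSep_iff_isSep (hA : A ⊆ compOf G S s) (hB : B ⊆ compOf G S t) (hs : s ∈ A)
    (ht : t ∈ B) {S' : Set V} (hS' : S' ⊆ S) : IsABSep G A B S' ↔ IsSep G s t S' := by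
  have hsub : S ⊆ (A ∪ B)ᶜ := subset_compl_union_of_subset_compOf hA hB
  constructor
  · rintro ⟨hS'AB, hsep⟩
    exact ⟨fun h => hS'AB h (Or.inl hs), fun h => hS'AB h (Or.inr ht), hsep s hs t ht⟩
  · rintro ⟨-, -, hst⟩
    refine ⟨hS'.trans hsub, fun a ha b hb hab => hst ?_⟩
    exact ((hA ha).mono hS').trans (hab.trans ((hB hb).mono hS').symm)

theorem isMinABSep_iff_isMinSep (hA : A ⊆ compOf G S s) (hB : B ⊆ compOf G S t) (hs : s ∈ A)
    (ht : t ∈ B) : IsMinABSep G A B S ↔ IsMinSep G s t S := by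
  unfold IsMinABSep IsMinSep
  rw [isABSep_iff_isSep hA hB hs ht subset_rfl]
  refine and_congr_right' (forall₂_congr fun S' hS' => ?_)
  rw [isABSep_iff_isSep hA hB hs ht hS'.subset]

end Separators

theorem stmt6_general (G : SimpleGraph V)
    (A B : Set V) (hAne : A.Nonempty) (hBne : B.Nonempty)
    (S : Set V) :
    (IsMinABSep G A B S ∧ IsSafeSep G A B S) ↔
      ∀ s ∈ A, ∀ t ∈ B, IsMinSep G s t S ∧
        A ⊆ compOf G S s ∧ B ⊆ compOf G S t := by
  constructor
  · rintro ⟨hmin, -, a, b, -, -, hAa, hBb, -⟩ s hs t ht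
    have hAs : A ⊆ compOf G S s := subset_compOf_of_mem hAa hs
    have hBt : B ⊆ compOf G S t := subset_compOf_of_mem hBb ht
    exact ⟨(isMinABSep_iff_isMinSep hAs hBt hs ht).mp hmin, hAs, hBt⟩
  · intro h
    obtain ⟨s, hs⟩ := hAne
    obtain ⟨t, ht⟩ := hBne
    obtain ⟨hmin, hAs, hBt⟩ := h s hs t ht
    refine ⟨(isMinABSep_iff_isMinSep hAs hBt hs ht).mpr hmin,
      subset_compl_union_of_subset_compOf hAs hBt, s, t, hmin.1.1, hmin.1.2.1, hAs, hBt,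
      disjoint_compOf hmin.1.2.2⟩

theorem stmt6 (G : SimpleGraph V) (hconn : G.Connected)
    (A B : Set V) (hAB : Disjoint A B) (hAne : A.Nonempty) (hBne : B.Nonempty)
    (hnadj : ∀ a ∈ A, ∀ b ∈ B, ¬ G.Adj a b) (S : Set V) :
    (IsMinABSep G A B S ∧ IsSafeSep G A B S) ↔
      ∀ s ∈ A, ∀ t ∈ B, IsMinSep G s t S ∧
        A ⊆ compOf G S s ∧ B ⊆ compOf G S t :=
  stmt6_general G A B hAne hBne S
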